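/- arXiv:2510.11293 — 4 statements merged into one kernel-verified Lean document; each statement's English description precedes it below -/
import Mathlib

section
/- If (X, <) is a well-ordered set, then the Dershowitz–Manna ordering on finite multisets over X is well-founded, where A <_DM B iff there exists x in X with multiplicity of x in A strictly less than in B, and for all y > x the multiplicities of y in A and B agree. -/
/-! Comparing multisets by their multiplicity functions, the Dershowitz–Manna ordering is the
colexicographic ordering on `X →₀ ℕ`, which is well-founded because `X` and `ℕ` are. -/

theorem Multiset.toColex_toFinsupp_lt_iff {α : Type*} [DecidableEq α] [LT α] {A B : Multiset α} :
    toColex A.toFinsupp < toColex B.toFinsupp ↔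
      ∃ x, A.count x < B.count x ∧ ∀ y, x < y → A.count y = B.count y := by
  simp only [Finsupp.Colex.lt_iff, ofColex_toColex, Multiset.toFinsupp_apply, and_comm]

/-- The Dershowitz–Manna ordering on finite multisets over a well-ordered set
`X` is well-founded: `A <_DM B` iff there is `x` with `mult_A(x) < mult_B(x)`
and `mult_A(y) = mult_B(y)` for all `y > x`. -/
theorem dershowitz_manna_wellFounded (X : Type*) [LinearOrder X] [DecidableEq X]
    [WellFoundedLT X] :
    WellFounded (fun A B : Multiset X =>
      ∃ x : X, A.count x < B.count x ∧ ∀ y : X, x < y → A.count y = B.count y) := by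
  have hColex : WellFounded (InvImage (· < ·) fun A : Multiset X => toColex A.toFinsupp) :=
    InvImage.wf _ wellFounded_lt
  exact Subrelation.wf Multiset.toColex_toFinsupp_lt_iff.2 hColex
end

section
/- For a finite set Φ of modal μ-calculus formulas, the closure Clos(Φ), defined as the least superset of Φ closed under the trace relation, is finite. -/
/-!
Every formula on a trace from a closed `φ` has the form `s[σ]`, where `s` is a subformula
occurrence of `φ` and `σ` sends each variable bound above `s` to the closed instance of its
binding fixpoint formula. Since `σ` is determined by the occurrence, there are finitely many
such formulas; they are closed under trace steps because unfolding `ηx.s[σ]` yields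
`s[σ, x ↦ ηx.s[σ]]`, the instance at the next occurrence down.
-/

/-- Formulas of the modal μ-calculus, with propositions, negated propositions
and variables indexed by natural numbers. -/
inductive Formula : Type
  | prop : ℕ → Formula
  | nprop : ℕ → Formula
  | var : ℕ → Formula
  | or : Formula → Formula → Formula
  | and : Formula → Formula → Formula
  | dia : Formula → Formula
  | box : Formula → Formula
  | mu : ℕ → Formula → Formula
  | nu : ℕ → Formula → Formula

/-- Negation of a modal μ-calculus formula. -/
def Formula.neg : Formula → Formula
  | .prop p => .nprop p
  | .nprop p => .prop p
  | .var x => .var x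
  | .or φ ψ => .and φ.neg ψ.neg
  | .and φ ψ => .or φ.neg ψ.neg
  | .dia φ => .box φ.neg
  | .box φ => .dia φ.neg
  | .mu x φ => .nu x φ.neg
  | .nu x φ => .mu x φ.neg

/-- `x` occurs free in a formula. -/
def Formula.FreeIn (x : ℕ) : Formula → Prop
  | .prop _ => False
  | .nprop _ => False
  | .var y => y = x
  | .or φ ψ => φ.FreeIn x ∨ ψ.FreeIn x
  | .and φ ψ => φ.FreeIn x ∨ ψ.FreeIn x
  | .dia φ => φ.FreeIn x
  | .box φ => φ.FreeIn x
  | .mu y φ => y ≠ x ∧ φ.FreeIn x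
  | .nu y φ => y ≠ x ∧ φ.FreeIn x

/-- `x` has a free occurrence lying within the scope of a ν-operator. -/
def Formula.FreeUnderNu (x : ℕ) : Formula → Prop
  | .prop _ => False
  | .nprop _ => False
  | .var _ => False
  | .or φ ψ => φ.FreeUnderNu x ∨ ψ.FreeUnderNu x
  | .and φ ψ => φ.FreeUnderNu x ∨ ψ.FreeUnderNu x
  | .dia φ => φ.FreeUnderNu x
  | .box φ => φ.FreeUnderNu x
  | .mu y φ => y ≠ x ∧ φ.FreeUnderNu x
  | .nu y φ => y ≠ x ∧ φ.FreeIn x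

/-- `x` has a free occurrence lying within the scope of a μ-operator. -/
def Formula.FreeUnderMu (x : ℕ) : Formula → Prop
  | .prop _ => False
  | .nprop _ => False
  | .var _ => False
  | .or φ ψ => φ.FreeUnderMu x ∨ ψ.FreeUnderMu x
  | .and φ ψ => φ.FreeUnderMu x ∨ ψ.FreeUnderMu x
  | .dia φ => φ.FreeUnderMu x
  | .box φ => φ.FreeUnderMu x
  | .mu y φ => y ≠ x ∧ φ.FreeIn x
  | .nu y φ => y ≠ x ∧ φ.FreeUnderMu x

/-- The (syntactic) subformula relation. -/
inductive Subformula : Formula → Formula → Prop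
  | refl (φ) : Subformula φ φ
  | orL {χ φ ψ} : Subformula χ φ → Subformula χ (.or φ ψ)
  | orR {χ φ ψ} : Subformula χ ψ → Subformula χ (.or φ ψ)
  | andL {χ φ ψ} : Subformula χ φ → Subformula χ (.and φ ψ)
  | andR {χ φ ψ} : Subformula χ ψ → Subformula χ (.and φ ψ)
  | dia {χ φ} : Subformula χ φ → Subformula χ (.dia φ)
  | box {χ φ} : Subformula χ φ → Subformula χ (.box φ)
  | mu {χ φ} (x) : Subformula χ φ → Subformula χ (.mu x φ)
  | nu {χ φ} (x) : Subformula χ φ → Subformula χ (.nu x φ)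

/-- A formula is alternation-free if for every subformula `μx.ψ` no free
occurrence of `x` in `ψ` is in the scope of a ν-operator, and dually. -/
def AlternationFree (φ : Formula) : Prop :=
  (∀ x ψ, Subformula (.mu x ψ) φ → ¬ ψ.FreeUnderNu x) ∧
  (∀ x ψ, Subformula (.nu x ψ) φ → ¬ ψ.FreeUnderMu x)

/-- Substitution of `δ` for the free occurrences of the variable `x`. -/
def Formula.subst (x : ℕ) (δ : Formula) : Formula → Formula
  | .prop p => .prop p
  | .nprop p => .nprop p
  | .var y => if y = x then δ else .var y
  | .or φ ψ => .or (Formula.subst x δ φ) (Formula.subst x δ ψ)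
  | .and φ ψ => .and (Formula.subst x δ φ) (Formula.subst x δ ψ)
  | .dia φ => .dia (Formula.subst x δ φ)
  | .box φ => .box (Formula.subst x δ φ)
  | .mu y φ => if y = x then .mu y φ else .mu y (Formula.subst x δ φ)
  | .nu y φ => if y = x then .nu y φ else .nu y (Formula.subst x δ φ)

/-- The trace-step relation: passing to a direct Boolean or modal subformula,
or unfolding a fixpoint formula. -/
inductive TraceStep : Formula → Formula → Prop
  | orL (φ ψ) : TraceStep (.or φ ψ) φ
  | orR (φ ψ) : TraceStep (.or φ ψ) ψ
  | andL (φ ψ) : TraceStep (.and φ ψ) φ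
  | andR (φ ψ) : TraceStep (.and φ ψ) ψ
  | dia (φ) : TraceStep (.dia φ) φ
  | box (φ) : TraceStep (.box φ) φ
  | mu (x φ) : TraceStep (.mu x φ) (Formula.subst x (.mu x φ) φ)
  | nu (x φ) : TraceStep (.nu x φ) (Formula.subst x (.nu x φ) φ)

/-- The trace relation: reflexive-transitive closure of the trace-step
relation. -/
def Trace : Formula → Formula → Prop := Relation.ReflTransGen TraceStep

/-- A formula is closed if it has no free variables. -/
def Formula.Closed (φ : Formula) : Prop := ∀ x, ¬ φ.FreeIn x

namespace Formula

/-- Simultaneous substitution. Like `Formula.subst` it is not capture-avoiding, which is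
harmless because the formulas substituted for free variables below are closed. -/
def psub (σ : ℕ → Formula) : Formula → Formula
  | .prop p => .prop p
  | .nprop p => .nprop p
  | .var y => σ y
  | .or a b => .or (psub σ a) (psub σ b)
  | .and a b => .and (psub σ a) (psub σ b)
  | .dia a => .dia (psub σ a)
  | .box a => .box (psub σ a)
  | .mu x a => .mu x (psub (Function.update σ x (.var x)) a)
  | .nu x a => .nu x (psub (Function.update σ x (.var x)) a)

@[simp]
theorem psub_var (t : Formula) : psub .var t = t := by
  induction t <;> simp_all [psub, Function.update_eq_self]

theorem exists_freeIn_of_freeIn_psub {σ : ℕ → Formula} {t : Formula} {z : ℕ}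
    (h : (psub σ t).FreeIn z) : ∃ y, t.FreeIn y ∧ (σ y).FreeIn z := by
  induction t generalizing σ with
  | prop | nprop => exact h.elim
  | var y => exact ⟨y, rfl, h⟩
  | or a b iha ihb | and a b iha ihb =>
    rcases h with h | h
    · obtain ⟨y, hy, hz⟩ := iha h; exact ⟨y, Or.inl hy, hz⟩
    · obtain ⟨y, hy, hz⟩ := ihb h; exact ⟨y, Or.inr hy, hz⟩
  | dia a ih | box a ih => exact ih h
  | mu x a ih | nu x a ih =>
    obtain ⟨hxz, h⟩ := h
    obtain ⟨y, hy, hz⟩ := ih h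
    by_cases hyx : y = x
    · subst hyx
      simp only [Function.update_self, FreeIn] at hz
      exact (hxz hz).elim
    · rw [Function.update_of_ne hyx] at hz
      exact ⟨y, ⟨Ne.symm hyx, hy⟩, hz⟩

theorem closed_psub {σ : ℕ → Formula} {t : Formula}
    (h : ∀ y, t.FreeIn y → (σ y).Closed) : (psub σ t).Closed := fun _ hz =>
  let ⟨y, hy, hyz⟩ := exists_freeIn_of_freeIn_psub hz
  h y hy _ hyz

theorem subst_of_not_freeIn {x : ℕ} {δ t : Formula} (h : ¬ t.FreeIn x) : subst x δ t = t := by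
  induction t with
  | prop | nprop => rfl
  | var y => simp_all [subst, FreeIn]
  | or a b iha ihb | and a b iha ihb => simp_all [subst, FreeIn]
  | dia a ih | box a ih => simp_all [subst, FreeIn]
  | mu y a ih | nu y a ih =>
    by_cases hyx : y = x
    · simp [subst, hyx]
    · simp_all [subst, FreeIn]

theorem subst_psub_update {x : ℕ} {δ t : Formula} {σ : ℕ → Formula}
    (hσ : ∀ z, z ≠ x → t.FreeIn z → ¬ (σ z).FreeIn x) :
    subst x δ (psub (Function.update σ x (.var x)) t) = psub (Function.update σ x δ) t := by
  induction t generalizing σ with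
  | prop | nprop => rfl
  | var y =>
    by_cases hyx : y = x
    · subst hyx
      simp [psub, subst]
    · simp only [psub, Function.update_of_ne hyx]
      exact subst_of_not_freeIn (hσ y hyx rfl)
  | or a b iha ihb | and a b iha ihb =>
    simp only [psub, subst]
    rw [iha fun z hzx hz => hσ z hzx (Or.inl hz), ihb fun z hzx hz => hσ z hzx (Or.inr hz)]
  | dia a ih | box a ih =>
    simp only [psub, subst]
    rw [ih hσ]
  | mu y a ih | nu y a ih =>
    by_cases hyx : y = x
    · subst hyx
      simp [psub, subst]
    · have hσ' := (Function.forall_update_iff σ (a := y) (b := .var y)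
          fun z φ => z ≠ x → a.FreeIn z → ¬ φ.FreeIn x).2
        ⟨fun _ _ => hyx, fun z hzy hzx hz => hσ z hzx ⟨Ne.symm hzy, hz⟩⟩
      simp only [psub, subst, if_neg hyx]
      rw [Function.update_comm (Ne.symm hyx), ih hσ', Function.update_comm hyx]

/-- `flClosure t σ` collects the formulas `psub σ' s` for the subformula occurrences `s`
of `t`, where `σ'` extends `σ` by sending each variable bound above `s` to (the instance
under `σ'` of) its binding fixpoint formula: a finite Fischer–Ladner closure. -/
def flClosure : Formula → (ℕ → Formula) → Set Formula
  | .prop p, _ => {.prop p}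
  | .nprop p, _ => {.nprop p}
  | .var y, σ => {σ y}
  | .or a b, σ => insert (psub σ (.or a b)) (flClosure a σ ∪ flClosure b σ)
  | .and a b, σ => insert (psub σ (.and a b)) (flClosure a σ ∪ flClosure b σ)
  | .dia a, σ => insert (psub σ (.dia a)) (flClosure a σ)
  | .box a, σ => insert (psub σ (.box a)) (flClosure a σ)
  | .mu x a, σ =>
    insert (psub σ (.mu x a)) (flClosure a (Function.update σ x (psub σ (.mu x a))))
  | .nu x a, σ =>
    insert (psub σ (.nu x a)) (flClosure a (Function.update σ x (psub σ (.nu x a))))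

theorem finite_flClosure (t : Formula) (σ : ℕ → Formula) : (flClosure t σ).Finite := by
  induction t generalizing σ <;>
    simp only [flClosure, Set.finite_singleton, Set.finite_insert, Set.finite_union, *, and_self]

theorem psub_mem_flClosure (t : Formula) (σ : ℕ → Formula) : psub σ t ∈ flClosure t σ := by
  cases t <;> simp [flClosure, psub]

theorem mem_of_traceStep_of_mem_flClosure {S : Set Formula} {t : Formula} {σ : ℕ → Formula}
    (hS : flClosure t σ ⊆ S) (hσ : ∀ z, t.FreeIn z → (σ z).Closed)
    (hσS : ∀ z, t.FreeIn z → ∀ χ, TraceStep (σ z) χ → χ ∈ S)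
    {ψ χ : Formula} (hψ : ψ ∈ flClosure t σ) (h : TraceStep ψ χ) : χ ∈ S := by
  induction t generalizing σ ψ with
  | prop | nprop =>
    rw [flClosure, Set.mem_singleton_iff] at hψ
    subst hψ
    cases h
  | var y =>
    rw [flClosure, Set.mem_singleton_iff] at hψ
    exact hσS y rfl χ (hψ ▸ h)
  | or a b iha ihb | and a b iha ihb =>
    rw [flClosure, Set.insert_subset_iff, Set.union_subset_iff] at hS
    simp only [flClosure, Set.mem_insert_iff, Set.mem_union] at hψ
    rcases hψ with rfl | hψ | hψ
    · cases h
      · exact hS.2.1 (psub_mem_flClosure a σ)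
      · exact hS.2.2 (psub_mem_flClosure b σ)
    · exact iha hS.2.1 (fun z hz => hσ z (.inl hz)) (fun z hz => hσS z (.inl hz)) hψ h
    · exact ihb hS.2.2 (fun z hz => hσ z (.inr hz)) (fun z hz => hσS z (.inr hz)) hψ h
  | dia a ih | box a ih =>
    rw [flClosure, Set.insert_subset_iff] at hS
    rw [flClosure, Set.mem_insert_iff] at hψ
    rcases hψ with rfl | hψ
    · cases h
      exact hS.2 (psub_mem_flClosure a σ)
    · exact ih hS.2 hσ hσS hψ h
  | mu x a ih | nu x a ih =>
    rw [flClosure, Set.insert_subset_iff] at hS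
    rw [flClosure, Set.mem_insert_iff] at hψ
    have hσx : ∀ z, z ≠ x → a.FreeIn z → ¬ (σ z).FreeIn x :=
      fun z hzx hz => hσ z ⟨Ne.symm hzx, hz⟩ x
    -- Unfolding `psub σ (ηx.a)` gives `psub (σ[x ↦ psub σ (ηx.a)]) a`
    rcases hψ with rfl | hψ
    · cases h
      rw [subst_psub_update hσx]
      exact hS.2 (psub_mem_flClosure a _)
    refine ih hS.2 ((Function.forall_update_iff σ fun z φ => a.FreeIn z → φ.Closed).2
        ⟨fun _ => closed_psub hσ, fun z hzx hz => hσ z ⟨Ne.symm hzx, hz⟩⟩)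
      ((Function.forall_update_iff σ
          fun z φ => a.FreeIn z → ∀ χ, TraceStep φ χ → χ ∈ S).2
        ⟨fun _ χ' h' => ?_, fun z hzx hz => hσS z ⟨Ne.symm hzx, hz⟩⟩) hψ h
    cases h'
    rw [subst_psub_update hσx]
    exact hS.2 (psub_mem_flClosure a _)

theorem mem_flClosure_of_trace {φ ψ : Formula} (hφ : φ.Closed) (h : Trace φ ψ) :
    ψ ∈ flClosure φ .var := by
  induction h with
  | refl => simpa using psub_mem_flClosure φ .var
  | tail _ hstep ih =>
    exact mem_of_traceStep_of_mem_flClosure subset_rfl (fun z hz => (hφ z hz).elim)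
      (fun z hz => (hφ z hz).elim) ih hstep

end Formula

/-- For a finite set `Φ` of closed formulas, the closure of `Φ` under the trace
relation is finite. -/
theorem closure_finite (Φ : Set Formula) (hfin : Φ.Finite)
    (hclosed : ∀ φ ∈ Φ, φ.Closed) :
    Set.Finite {ψ : Formula | ∃ φ ∈ Φ, Trace φ ψ} := by
  refine (hfin.biUnion fun φ _ => Formula.finite_flClosure φ .var).subset ?_
  rintro ψ ⟨φ, hφ, hψ⟩
  exact Set.mem_biUnion hφ (Formula.mem_flClosure_of_trace (hclosed φ hφ) hψ)
end

section
/- On every finite trace χ_1, ..., χ_n of modal μ-calculus formulas there is an index i such that χ_i is a subformula of every formula on the trace, and moreover χ_i can be chosen to be a fixpoint formula whenever χ_n is a fixpoint formula. -/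
/-- A formula is a fixpoint formula. -/
def Formula.IsFixpoint (φ : Formula) : Prop :=
  ∃ x ψ, φ = Formula.mu x ψ ∨ φ = Formula.nu x ψ

/-!
A subformula `χ` of an unfolding `ψ[ηx.ψ/x]` is a subformula of `ψ`, or of `ηx.ψ`, or (when it
contains a substituted occurrence) it contains `ηx.ψ`. So, reading a trace backwards from its last
formula, a common subformula of the tail either stays a subformula of the new first formula, or
that first formula is the unfolded fixpoint formula, which then lies below the old candidate and
becomes the new one.
-/

theorem Subformula.trans {χ φ ψ : Formula} (hχφ : Subformula χ φ) (hφψ : Subformula φ ψ) :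
    Subformula χ ψ := by
  induction hφψ with
  | refl => exact hχφ
  | orL _ ih => exact .orL ih
  | orR _ ih => exact .orR ih
  | andL _ ih => exact .andL ih
  | andR _ ih => exact .andR ih
  | dia _ ih => exact .dia ih
  | box _ ih => exact .box ih
  | mu x _ ih => exact .mu x ih
  | nu x _ ih => exact .nu x ih

namespace Formula

variable {x : ℕ} {δ : Formula}

theorem subst_eq_self_of_not_freeIn {φ : Formula} (h : ¬ φ.FreeIn x) : subst x δ φ = φ := by
  induction φ with
  | prop | nprop => rfl
  | var y => simp_all [FreeIn, subst]
  | or φ ψ ihφ ihψ | and φ ψ ihφ ihψ =>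
    simp only [FreeIn, not_or] at h
    simp only [subst, ihφ h.1, ihψ h.2]
  | dia φ ih | box φ ih => simp only [subst, ih h]
  | mu y φ ih | nu y φ ih =>
    by_cases hyx : y = x
    · simp only [subst, if_pos hyx]
    · simp only [FreeIn, hyx, ne_eq, not_false_eq_true, true_and] at h
      simp only [subst, if_neg hyx, ih h]

theorem subformula_subst_of_freeIn {φ : Formula} (h : φ.FreeIn x) :
    Subformula δ (subst x δ φ) := by
  induction φ with
  | prop | nprop => exact h.elim
  | var y =>
    simp only [FreeIn] at h
    simpa [subst, h] using Subformula.refl δ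
  | or φ ψ ihφ ihψ => exact h.elim (.orL ∘ ihφ) (.orR ∘ ihψ)
  | and φ ψ ihφ ihψ => exact h.elim (.andL ∘ ihφ) (.andR ∘ ihψ)
  | dia φ ih => exact .dia (ih h)
  | box φ ih => exact .box (ih h)
  | mu y φ ih =>
    simpa only [subst, if_neg h.1] using Subformula.mu y (ih h.2)
  | nu y φ ih =>
    simpa only [subst, if_neg h.1] using Subformula.nu y (ih h.2)

theorem subformula_subst_or_subst_subformula (φ : Formula) :
    Subformula δ (subst x δ φ) ∨ Subformula (subst x δ φ) φ := by
  by_cases h : φ.FreeIn x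
  · exact .inl (subformula_subst_of_freeIn h)
  · rw [subst_eq_self_of_not_freeIn h]
    exact .inr (.refl φ)

theorem subformula_of_subformula_subst {φ χ : Formula} (h : Subformula χ (subst x δ φ)) :
    Subformula χ δ ∨ Subformula δ χ ∨ Subformula χ φ := by
  induction φ generalizing χ with
  | prop | nprop => exact .inr (.inr h)
  | var y =>
    by_cases hyx : y = x
    · simp only [subst, if_pos hyx] at h
      exact .inl h
    · simp only [subst, if_neg hyx] at h
      exact .inr (.inr h)
  | or φ ψ ihφ ihψ =>
    cases h with
    | refl => exact .inr (subformula_subst_or_subst_subformula (.or φ ψ))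
    | orL h => exact (ihφ h).imp_right (Or.imp_right .orL)
    | orR h => exact (ihψ h).imp_right (Or.imp_right .orR)
  | and φ ψ ihφ ihψ =>
    cases h with
    | refl => exact .inr (subformula_subst_or_subst_subformula (.and φ ψ))
    | andL h => exact (ihφ h).imp_right (Or.imp_right .andL)
    | andR h => exact (ihψ h).imp_right (Or.imp_right .andR)
  | dia φ ih =>
    cases h with
    | refl => exact .inr (subformula_subst_or_subst_subformula (.dia φ))
    | dia h => exact (ih h).imp_right (Or.imp_right .dia)
  | box φ ih =>
    cases h with
    | refl => exact .inr (subformula_subst_or_subst_subformula (.box φ))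
    | box h => exact (ih h).imp_right (Or.imp_right .box)
  | mu y φ ih =>
    by_cases hyx : y = x
    · simp only [subst, if_pos hyx] at h
      exact .inr (.inr h)
    · have := subformula_subst_or_subst_subformula (x := x) (δ := δ) (.mu y φ)
      simp only [subst, if_neg hyx] at h this
      cases h with
      | refl => exact .inr this
      | mu _ h => exact (ih h).imp_right (Or.imp_right (.mu y))
  | nu y φ ih =>
    by_cases hyx : y = x
    · simp only [subst, if_pos hyx] at h
      exact .inr (.inr h)
    · have := subformula_subst_or_subst_subformula (x := x) (δ := δ) (.nu y φ)
      simp only [subst, if_neg hyx] at h this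
      cases h with
      | refl => exact .inr this
      | nu _ h => exact (ih h).imp_right (Or.imp_right (.nu y))

end Formula

theorem TraceStep.subformula_or_isFixpoint {α β χ : Formula} (hstep : TraceStep α β)
    (hχ : Subformula χ β) : Subformula χ α ∨ (Subformula α χ ∧ α.IsFixpoint) := by
  cases hstep with
  | orL => exact .inl (.orL hχ)
  | orR => exact .inl (.orR hχ)
  | andL => exact .inl (.andL hχ)
  | andR => exact .inl (.andR hχ)
  | dia => exact .inl (.dia hχ)
  | box => exact .inl (.box hχ)
  | mu x φ =>
    rcases Formula.subformula_of_subformula_subst hχ with h | h | h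
    · exact .inl h
    · exact .inr ⟨h, x, φ, .inl rfl⟩
    · exact .inl (.mu x h)
  | nu x φ =>
    rcases Formula.subformula_of_subformula_subst hχ with h | h | h
    · exact .inl h
    · exact .inr ⟨h, x, φ, .inr rfl⟩
    · exact .inl (.nu x h)

theorem exists_mem_forall_subformula_of_isChain {l : List Formula} (htrace : l.IsChain TraceStep)
    (hne : l ≠ []) : ∃ χ ∈ l, (∀ φ ∈ l, Subformula χ φ) ∧
      ((l.getLast hne).IsFixpoint → χ.IsFixpoint) := by
  induction htrace with
  | nil => exact absurd rfl hne
  | singleton φ => exact ⟨φ, by simp, by simpa using Subformula.refl φ, by simp⟩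
  | @cons_cons φ ψ l hstep _ ih =>
    obtain ⟨χ, hχ, hχ_sub, hχ_fix⟩ := ih (List.cons_ne_nil ψ l)
    rw [List.getLast_cons (List.cons_ne_nil ψ l)]
    rcases hstep.subformula_or_isFixpoint (hχ_sub ψ List.mem_cons_self) with hχφ | ⟨hφχ, hφ⟩
    · refine ⟨χ, List.mem_cons_of_mem φ hχ, ?_, hχ_fix⟩
      simpa [hχφ] using hχ_sub
    · refine ⟨φ, List.mem_cons_self, ?_, fun _ => hφ⟩
      simpa [Subformula.refl φ] using fun θ hθ => hφχ.trans (hχ_sub θ hθ)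

/-- On every finite trace there is a formula that is a subformula of every
formula on the trace, which can be chosen to be a fixpoint formula whenever the
last formula of the trace is one. -/
theorem trace_has_common_subformula (l : List Formula) (hne : l ≠ [])
    (htrace : l.Chain' TraceStep) :
    ∃ i : Fin l.length,
      (∀ j : Fin l.length, Subformula (l.get i) (l.get j)) ∧
      ((l.getLast hne).IsFixpoint → (l.get i).IsFixpoint) := by
  obtain ⟨χ, hχ, hχ_sub, hχ_fix⟩ := exists_mem_forall_subformula_of_isChain htrace hne
  obtain ⟨i, rfl⟩ := List.mem_iff_get.mp hχ
  exact ⟨i, fun j => hχ_sub _ (List.get_mem l j), hχ_fix⟩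
end

section
/- If every element of a finite sequence of sequents is a multiset over a fixed finite set X, and the sequence has length strictly greater than the maximal length of (f,t)-controlled bad sequences over multisets of X ordered by inclusion (with f(n) = n + 2 and t the norm of the first sequent), and consecutive sequents satisfy |Σ_{n+1}|_∞ ≤ |Σ_n|_∞ + 2, then there exist indices i < j with Σ_i ⊆ Σ_j. -/
def multisetNormInf {X : Type*} [Fintype X] [DecidableEq X] (A : Multiset X) : ℕ :=
  Finset.univ.sup A.count

theorem Fin.apply_le_apply_zero_add_mul {L c : ℕ} (a : Fin L → ℕ)
    (ha : ∀ (i : ℕ) (h : i + 1 < L), a ⟨i + 1, h⟩ ≤ a ⟨i, Nat.lt_of_succ_lt h⟩ + c)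
    (i : Fin L) : a i ≤ a ⟨0, i.pos⟩ + c * i := by
  obtain ⟨i, hi⟩ := i
  induction i with
  | zero => simp
  | succ k ih =>
    calc a ⟨k + 1, hi⟩ ≤ a ⟨k, Nat.lt_of_succ_lt hi⟩ + c := ha k hi
      _ ≤ a ⟨0, hi.pos⟩ + c * (k + 1) := by
        have := ih (Nat.lt_of_succ_lt hi)
        dsimp only at this
        rw [Nat.mul_succ]
        omega

/-- If a finite sequence of sequents (multisets over a finite set `X`) has
consecutive norms growing by at most `2` and is longer than the maximal length
`N` of `(f,t)`-controlled bad sequences over multisets of `X` ordered by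
inclusion (with `f(n) = n + 2` and `t` the norm of the first sequent), then
some earlier sequent is included in a later one. -/
theorem sequent_sequence_has_inclusion
    (X : Type*) [Fintype X] [DecidableEq X]
    (L : ℕ) (Seq : Fin L → Multiset X)
    (N : ℕ) (hL : N < L)
    (hN : ∀ (m : ℕ) (B : Fin m → Multiset X),
      (∀ i j : Fin m, i < j → ¬ B i ≤ B j) →
      (∀ i : Fin m, multisetNormInf (B i) ≤
        multisetNormInf (Seq ⟨0, Nat.lt_of_le_of_lt (Nat.zero_le N) hL⟩) + 2 * i) →
      m ≤ N)
    (hgrow : ∀ (i : ℕ) (h : i + 1 < L),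
      multisetNormInf (Seq ⟨i + 1, h⟩) ≤ multisetNormInf (Seq ⟨i, Nat.lt_of_succ_lt h⟩) + 2) :
    ∃ i j : Fin L, i < j ∧ Seq i ≤ Seq j := by
  by_contra! hbad
  have hcontrolled : ∀ i : Fin L, multisetNormInf (Seq i) ≤
      multisetNormInf (Seq ⟨0, Nat.lt_of_le_of_lt (Nat.zero_le N) hL⟩) + 2 * i :=
    Fin.apply_le_apply_zero_add_mul (multisetNormInf ∘ Seq) hgrow
  exact absurd (hN L Seq hbad hcontrolled) (Nat.not_le.mpr hL)
end
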